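/- Let (X,d,μ) be a metric measure space, (U,φ) an n-dimensional chart on X, a < b reals, and h : ℝ → (a,b) a Lipschitz bijection whose inverse h⁻¹ : (a,b) → ℝ is differentiable. Let f : U → ℝ be a function such that h∘f is Lipschitz and admits a metric differential md(h∘f) with respect to (U,φ). Then f admits a metric differential with respect to (U,φ), given μ-a.e. on U by md_x f = |(h⁻¹)'(h(f(x)))| · md_x(h∘f). -/

import Mathlib

open MeasureTheory Filter Set Metric
open scoped ENNReal NNReal Topology RealInnerProductSpace

noncomputable section

abbrev Euc (n : ℕ) : Type := EuclideanSpace ℝ (Fin n)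

/-- The pointwise Lipschitz constant of `g` at `x`, restricted to the set `s`. -/
def lipWithin {X Y : Type*} [MetricSpace X] [MetricSpace Y]
    (g : X → Y) (s : Set X) (x : X) : ℝ :=
  Filter.limsup (fun y => dist (g y) (g x) / dist y x) (𝓝[s \ {x}] x)

/-- `p : ℝⁿ → ℝ` is (the function of) a seminorm. -/
def IsSeminormFn {n : ℕ} (p : Euc n → ℝ) : Prop :=
  ∃ s : Seminorm ℝ (Euc n), ∀ v, p v = s v

/-- `f : A ⊂ X → Y` admits a metric differential with respect to the chart `(U, φ)`. -/
def HasMetricDiff {X Y : Type*} [MetricSpace X] [MeasurableSpace X] [MetricSpace Y] {n : ℕ}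
    (μ : Measure X) (U : Set X) (φ : X → Euc n) (A : Set X) (f : X → Y) : Prop :=
  ∃ md : X → Euc n → ℝ,
    (∀ x ∈ A ∩ U, IsSeminormFn (md x)) ∧
    (∀ v : Euc n, Measurable fun x => md x v) ∧
    ∀ᵐ x ∂μ.restrict (A ∩ U),
      Tendsto (fun y => |dist (f y) (f x) - md x (φ y - φ x)| / dist y x)
        (𝓝[A \ {x}] x) (𝓝 0)

/-- `(U, φ)` is an `n`-dimensional chart. -/
def IsChart {X : Type*} [MetricSpace X] [MeasurableSpace X] {n : ℕ}
    (μ : Measure X) (U : Set X) (φ : X → Euc n) : Prop :=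
  MeasurableSet U ∧ 0 < μ U ∧ ∃ K : ℝ≥0, LipschitzWith K φ

/-- Condition (*): all directional slopes of `φ` are positive a.e. on `U`. -/
def ChartStar {X : Type*} [MetricSpace X] [MeasurableSpace X] {n : ℕ}
    (μ : Measure X) (U : Set X) (φ : X → Euc n) : Prop :=
  ∀ v : Euc n, ‖v‖ = 1 →
    ∀ᵐ x ∂μ.restrict U, 0 < lipWithin (fun y => (inner ℝ v (φ y) : ℝ)) U x

/-- `f` is `L`-bi-Lipschitz on `s`. -/
def BiLipschitzOn {X Y : Type*} [MetricSpace X] [MetricSpace Y]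
    (L : ℝ) (f : X → Y) (s : Set X) : Prop :=
  ∀ x ∈ s, ∀ y ∈ s, L⁻¹ * dist x y ≤ dist (f x) (f y) ∧ dist (f x) (f y) ≤ L * dist x y

/-- `(X, d, μ)` is `n`-rectifiable. -/
def IsRectifiable (n : ℕ) (X : Type*) [MetricSpace X] [MeasurableSpace X] [BorelSpace X]
    (μ : Measure X) : Prop :=
  μ ≪ μH[(n : ℝ)] ∧
  ∃ (E : ℕ → Set (Euc n)) (ψ : ℕ → Euc n → X) (K : ℕ → ℝ≥0),
    (∀ i, MeasurableSet (E i)) ∧ (∀ i, LipschitzOnWith (K i) (ψ i) (E i)) ∧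
    μ ((⋃ i, ψ i '' E i)ᶜ) = 0

/-- `(U, φ)` is a weak Cheeger chart: every Lipschitz function `X → ℝ` has a unique
linear differential at `μ`-a.e. point of `U`, with the limit taken within `U`. -/
def IsWeakCheegerChart {X : Type*} [MetricSpace X] [MeasurableSpace X] {n : ℕ}
    (μ : Measure X) (U : Set X) (φ : X → Euc n) : Prop :=
  IsChart μ U φ ∧
  ∀ (f : X → ℝ) (K : ℝ≥0), LipschitzWith K f →
    ∀ᵐ x ∂μ.restrict U, ∃! L : Euc n →ₗ[ℝ] ℝ,
      Tendsto (fun y => |f y - f x - L (φ y - φ x)| / dist y x) (𝓝[U \ {x}] x) (𝓝 0)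

/-- `(U, φ)` is a Cheeger chart: as a weak Cheeger chart, but with the limit
taken in all of `X`. -/
def IsCheegerChart {X : Type*} [MetricSpace X] [MeasurableSpace X] {n : ℕ}
    (μ : Measure X) (U : Set X) (φ : X → Euc n) : Prop :=
  IsChart μ U φ ∧
  ∀ (f : X → ℝ) (K : ℝ≥0), LipschitzWith K f →
    ∀ᵐ x ∂μ.restrict U, ∃! L : Euc n →ₗ[ℝ] ℝ,
      Tendsto (fun y => |f y - f x - L (φ y - φ x)| / dist y x) (𝓝[≠] x) (𝓝 0)

/-!
Near `x`, write `f = g ∘ (h ∘ f)`. Since `g` is differentiable at `h (f x)` with derivative `c`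
and `h ∘ f` is Lipschitz, `f y - f x = c (h (f y) - h (f x)) + o(d(x, y))`. Taking absolute
values, `|f y - f x| = |c| |h (f y) - h (f x)| + o(d(x, y))`, and the metric differential of
`h ∘ f` at `x`, scaled by `|c|`, is one of `f`.
-/

open Asymptotics

theorem IsSeminormFn.const_mul {n : ℕ} {p : Euc n → ℝ} (hp : IsSeminormFn p) {c : ℝ}
    (hc : 0 ≤ c) : IsSeminormFn (fun v => c * p v) := by
  obtain ⟨s, hs⟩ := hp
  exact ⟨c.toNNReal • s, fun v => by
    show c * p v = _; rw [hs v, smul_apply, NNReal.smul_def, smul_eq_mul, Real.coe_toNNReal _ hc]⟩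

theorem abs_abs_sub_abs_mul_le (p q c m : ℝ) :
    abs (|p| - |c| * m) ≤ |p - c * q| + |c| * abs (|q| - m) :=
  calc abs (|p| - |c| * m) = abs ((|p| - |c * q|) + |c| * (|q| - m)) := by rw [abs_mul]; ring_nf
    _ ≤ abs (|p| - |c * q|) + abs (|c| * (|q| - m)) := abs_add_le _ _
    _ ≤ |p - c * q| + |c| * abs (|q| - m) := by
      rw [abs_mul |c| (|q| - m), abs_abs]
      exact add_le_add_left (abs_abs_sub_abs_le_abs_sub p (c * q)) _

theorem LipschitzOnWith.isBigO_sub_dist {X : Type*} [PseudoMetricSpace X] {K : ℝ≥0}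
    {u : X → ℝ} {s : Set X} (hu : LipschitzOnWith K u s) {x : X} (hx : x ∈ s) :
    (fun y => u y - u x) =O[𝓝[s] x] (fun y => dist y x) :=
  IsBigO.of_bound K <| eventually_nhdsWithin_of_forall fun y hy => by
    simpa [← Real.dist_eq] using hu.dist_le_mul y hy x hx

theorem HasDerivAt.isLittleO_comp_sub {α : Type*} {l : Filter α} {g : ℝ → ℝ} {c t : ℝ}
    (hg : HasDerivAt g c t) {u : α → ℝ} (hu : Tendsto u l (𝓝 t)) :
    (fun y => g (u y) - g t - c * (u y - t)) =o[l] (fun y => u y - t) := by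
  simpa [Function.comp_def, mul_comm c] using hg.isLittleO.comp_tendsto hu

/-- `ψ y` stands for `md_x u (φ y - φ x)`. -/
theorem tendsto_abs_abs_sub_div_dist_comp {X : Type*} [MetricSpace X] {s : Set X} {x : X}
    (hx : x ∈ s) {u : X → ℝ} {K : ℝ≥0} (hu : LipschitzOnWith K u s) {g : ℝ → ℝ} {c : ℝ}
    (hg : HasDerivAt g c (u x)) {ψ : X → ℝ}
    (hψ : Tendsto (fun y => abs (|u y - u x| - ψ y) / dist y x) (𝓝[s \ {x}] x) (𝓝 0)) :
    Tendsto (fun y => abs (|g (u y) - g (u x)| - |c| * ψ y) / dist y x) (𝓝[s \ {x}] x) (𝓝 0) := by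
  have hl : 𝓝[s \ {x}] x ≤ 𝓝[s] x := nhdsWithin_mono x sdiff_subset
  have hlin : (fun y => g (u y) - g (u x) - c * (u y - u x)) =o[𝓝[s \ {x}] x]
      (fun y => dist y x) :=
    (hg.isLittleO_comp_sub (((hu.continuousOn x hx).tendsto).mono_left hl)).trans_isBigO
      ((hu.isBigO_sub_dist hx).mono hl)
  have hlin_div : Tendsto (fun y => |g (u y) - g (u x) - c * (u y - u x)| / dist y x)
      (𝓝[s \ {x}] x) (𝓝 0) := by
    simpa using hlin.norm_left.tendsto_div_nhds_zero
  refine squeeze_zero (fun y => by positivity) (fun y => ?_)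
    (by simpa using hlin_div.add (hψ.const_mul |c|))
  rw [mul_div_assoc', ← add_div]
  gcongr
  exact abs_abs_sub_abs_mul_le _ _ _ _

theorem metric_diff_of_comp_general {X : Type*} [MetricSpace X]
    [MeasurableSpace X]
    (μ : Measure X)
    {n : ℕ} (U : Set X) (φ : X → Euc n) (hchart : IsChart μ U φ)
    {a b : ℝ} (h : ℝ → ℝ)
    (hbij : Set.BijOn h Set.univ (Set.Ioo a b))
    (g : ℝ → ℝ) (hg : ∀ t, g (h t) = t)
    (g' : ℝ → ℝ) (hg' : ∀ s ∈ Set.Ioo a b, HasDerivAt g (g' s) s)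
    (f : X → ℝ) (K : ℝ≥0) (hhf : LipschitzOnWith K (h ∘ f) U)
    (md' : X → Euc n → ℝ) (hsem : ∀ x ∈ U, IsSeminormFn (md' x))
    (hmd' : ∀ᵐ x ∂μ.restrict U,
      Tendsto (fun y => abs (|h (f y) - h (f x)| - md' x (φ y - φ x)) / dist y x)
        (𝓝[U \ {x}] x) (𝓝 0)) :
    (∀ x ∈ U, IsSeminormFn (fun v => |g' (h (f x))| * md' x v)) ∧
    ∀ᵐ x ∂μ.restrict U,
      Tendsto (fun y => abs (|f y - f x| - |g' (h (f x))| * md' x (φ y - φ x)) / dist y x)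
        (𝓝[U \ {x}] x) (𝓝 0) := by
  refine ⟨fun x hx => (hsem x hx).const_mul (abs_nonneg _), ?_⟩
  filter_upwards [hmd', ae_restrict_mem hchart.1] with x hx hxU
  have hderiv := hg' _ (hbij.mapsTo (mem_univ (f x)))
  simpa only [Function.comp_apply, hg] using
    tendsto_abs_abs_sub_div_dist_comp hxU hhf hderiv hx

/-- **Lemma (from the proof of Lemma 4.1):** if `h : ℝ → (a,b)` is a Lipschitz bijection
with differentiable inverse and `h ∘ f` admits a metric differential w.r.t. `(U, φ)`, then
so does `f`, given a.e. by `md_x f = |(h⁻¹)'(h(f x))| · md_x (h ∘ f)`. -/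
theorem metric_diff_of_comp {X : Type*} [MetricSpace X] [CompleteSpace X] [TopologicalSpace.SeparableSpace X]
    [MeasurableSpace X] [BorelSpace X]
    (μ : Measure X) (hμ : ∀ s : Set X, Bornology.IsBounded s → μ s ≠ ∞)
    {n : ℕ} (U : Set X) (φ : X → Euc n) (hchart : IsChart μ U φ)
    {a b : ℝ} (hab : a < b) (h : ℝ → ℝ) (Kh : ℝ≥0) (hh : LipschitzWith Kh h)
    (hbij : Set.BijOn h Set.univ (Set.Ioo a b))
    (g : ℝ → ℝ) (hg : ∀ t, g (h t) = t)
    (g' : ℝ → ℝ) (hg' : ∀ s ∈ Set.Ioo a b, HasDerivAt g (g' s) s)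
    (f : X → ℝ) (K : ℝ≥0) (hhf : LipschitzOnWith K (h ∘ f) U)
    (md' : X → Euc n → ℝ) (hsem : ∀ x ∈ U, IsSeminormFn (md' x))
    (hmd' : ∀ᵐ x ∂μ.restrict U,
      Tendsto (fun y => abs (|h (f y) - h (f x)| - md' x (φ y - φ x)) / dist y x)
        (𝓝[U \ {x}] x) (𝓝 0)) :
    (∀ x ∈ U, IsSeminormFn (fun v => |g' (h (f x))| * md' x v)) ∧
    ∀ᵐ x ∂μ.restrict U,
      Tendsto (fun y => abs (|f y - f x| - |g' (h (f x))| * md' x (φ y - φ x)) / dist y x)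
        (𝓝[U \ {x}] x) (𝓝 0) :=
  metric_diff_of_comp_general μ U φ hchart h hbij g hg g' hg' f K hhf md' hsem hmd'

end
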